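/- arXiv:1907.08829 — 2 statements merged into one kernel-verified Lean document; each statement's English description precedes it below -/
import Mathlib

section
/- If R_min > 1, then Λ(p) > 0 for every p ∈ [0,1]^N; i.e., for every p ∈ [0,1]^N the matrix B*(p) − D has an eigenvalue with positive real part. -/
/-!
Write `M = B*(p)`, which is entrywise nonnegative, and `D = diag δ`. Since
`ρ(M D⁻¹) ≥ R_min > 1`, the matrix `M D⁻¹` has an eigenvalue `μ` with `|μ| > 1`, and the
triangle inequality turns an eigenvector `u` into `v = D⁻¹|u| ≥ 0` with `(M - D) v ≥ ε v`
for some `ε > 0`. For large `c`, `A = M - D + c I` is entrywise nonnegative with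
`A v ≥ (c + ε) v`, so `‖Aᵏ‖` grows like `(c + ε)ᵏ` and Gelfand's formula yields an eigenvalue
`c + y` of `A` with `|c + y| ≥ c + ε`. Here `y` is an eigenvalue of `M - D` with
`|y| ≤ ‖M - D‖`, and once `2 c ε ≥ ‖M - D‖²` this forces `Re y > 0`.
-/

open Matrix Filter Topology

/-- Spectral radius of a real matrix: sup of absolute values of its complex eigenvalues. -/
noncomputable def specRad (N : ℕ) (A : Matrix (Fin N) (Fin N) ℝ) : ℝ :=
  sSup {r : ℝ | ∃ μ ∈ spectrum ℂ (A.map (Complex.ofReal : ℝ → ℂ)), r = ‖μ‖}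

/-- Spectral abscissa of a real matrix: sup of real parts of its complex eigenvalues. -/
noncomputable def specAbsc (N : ℕ) (A : Matrix (Fin N) (Fin N) ℝ) : ℝ :=
  sSup {r : ℝ | ∃ μ ∈ spectrum ℂ (A.map (Complex.ofReal : ℝ → ℂ)), r = μ.re}

/-- Irreducibility of a nonnegative matrix. -/
def MatIrreducible (N : ℕ) (A : Matrix (Fin N) (Fin N) ℝ) : Prop :=
  ∀ i j : Fin N, ∃ m : ℕ, 0 < m ∧ 0 < (A ^ m) i j

/-- The cube [0,1]^N. -/
def cube (N : ℕ) : Set (Fin N → ℝ) := {p | ∀ j, 0 ≤ p j ∧ p j ≤ 1}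

/-- B*(p) = (I − diag p) B̂ + diag p · B. -/
noncomputable def Bstar (N : ℕ) (B Bh : Matrix (Fin N) (Fin N) ℝ) (p : Fin N → ℝ) :
    Matrix (Fin N) (Fin N) ℝ :=
  (1 - Matrix.diagonal p) * Bh + Matrix.diagonal p * B

/-- The network SIRI vector field on (p^S, p^I). -/
noncomputable def siriField (N : ℕ) (B Bh D : Matrix (Fin N) (Fin N) ℝ)
    (y : (Fin N → ℝ) × (Fin N → ℝ)) : (Fin N → ℝ) × (Fin N → ℝ) :=
  (fun j => -(y.1 j * (B *ᵥ y.2) j),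
   fun j => ((Bstar N B Bh y.1 - D) *ᵥ y.2) j - y.2 j * (Bh *ᵥ y.2) j)

/-- Membership in the state space Δ_N. -/
def inSimplex (N : ℕ) (y : (Fin N → ℝ) × (Fin N → ℝ)) : Prop :=
  ∀ j, 0 ≤ y.1 j ∧ 0 ≤ y.2 j ∧ y.1 j + y.2 j ≤ 1

/-- y is a solution of the SIRI dynamics for t ≥ 0. -/
def IsSol (N : ℕ) (B Bh D : Matrix (Fin N) (Fin N) ℝ)
    (y : ℝ → (Fin N → ℝ) × (Fin N → ℝ)) : Prop :=
  ∀ t : ℝ, 0 ≤ t → HasDerivAt y (siriField N B Bh D (y t)) t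

/-- Reproduction number R(p) = ρ(B*(p) D⁻¹). -/
noncomputable def Rnum (N : ℕ) (B Bh D : Matrix (Fin N) (Fin N) ℝ) (p : Fin N → ℝ) : ℝ :=
  specRad N (Bstar N B Bh p * D⁻¹)

/-- Maximum basic reproduction number. -/
noncomputable def Rmax (N : ℕ) (B Bh D : Matrix (Fin N) (Fin N) ℝ) : ℝ :=
  sSup (Rnum N B Bh D '' cube N)

/-- Minimum basic reproduction number. -/
noncomputable def Rmin (N : ℕ) (B Bh D : Matrix (Fin N) (Fin N) ℝ) : ℝ :=
  sInf (Rnum N B Bh D '' cube N)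

open scoped Matrix.Norms.Operator

theorem spectrum.ofReal_le_spectralRadius_of_mul_pow_le_norm_pow {A : Type*} [NormedRing A]
    [NormedAlgebra ℂ A] [CompleteSpace A] (a : A) {C θ : ℝ} (hC : 0 < C) (hθ : 0 ≤ θ)
    (h : ∀ k : ℕ, C * θ ^ k ≤ ‖a ^ k‖) :
    ENNReal.ofReal θ ≤ spectralRadius ℂ a := by
  have hroot : Tendsto (fun k : ℕ => C ^ (1 / k : ℝ) * θ) atTop (𝓝 θ) := by
    have := ((Real.continuousAt_const_rpow hC.ne').tendsto.comp
      tendsto_one_div_atTop_nhds_zero_nat).mul_const θ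
    simpa using this
  refine le_of_tendsto_of_tendsto (ENNReal.tendsto_ofReal hroot)
    (spectrum.pow_norm_pow_one_div_tendsto_nhds_spectralRadius a) ?_
  filter_upwards [eventually_ne_atTop 0] with k hk
  refine ENNReal.ofReal_le_ofReal ?_
  calc C ^ (1 / k : ℝ) * θ = (C * θ ^ k) ^ (1 / k : ℝ) := by
        rw [Real.mul_rpow hC.le (by positivity), one_div, Real.pow_rpow_inv_natCast hθ hk]
    _ ≤ ‖a ^ k‖ ^ (1 / k : ℝ) := Real.rpow_le_rpow (by positivity) (h k) (by positivity)

theorem spectrum.exists_le_norm_of_mul_pow_le_norm_pow {A : Type*} [NormedRing A]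
    [NormedAlgebra ℂ A] [CompleteSpace A] [Nontrivial A] (a : A) {C θ : ℝ} (hC : 0 < C)
    (hθ : 0 ≤ θ) (h : ∀ k : ℕ, C * θ ^ k ≤ ‖a ^ k‖) :
    ∃ μ ∈ spectrum ℂ a, θ ≤ ‖μ‖ := by
  obtain ⟨μ, hμ, hμa⟩ := spectrum.exists_nnnorm_eq_spectralRadius a
  refine ⟨μ, hμ, (ENNReal.ofReal_le_ofReal_iff (norm_nonneg μ)).mp ?_⟩
  rw [ofReal_norm, enorm_eq_nnnorm, hμa]
  exact spectrum.ofReal_le_spectralRadius_of_mul_pow_le_norm_pow a hC hθ h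

theorem Complex.re_pos_of_add_le_norm_add {c ε K : ℝ} {y : ℂ} (hε : 0 < ε)
    (hc : K ^ 2 ≤ 2 * c * ε) (hy : ‖y‖ ≤ K) (h : c + ε ≤ ‖(c : ℂ) + y‖) :
    0 < y.re := by
  have hc0 : 0 ≤ c := by nlinarith [sq_nonneg K]
  have hsq : (c + ε) ^ 2 ≤ c ^ 2 + 2 * c * y.re + ‖y‖ ^ 2 := by
    have : ‖(c : ℂ) + y‖ ^ 2 = c ^ 2 + 2 * c * y.re + ‖y‖ ^ 2 := by
      simp only [Complex.sq_norm, Complex.normSq_apply, Complex.add_re, Complex.add_im,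
        Complex.ofReal_re, Complex.ofReal_im]
      ring
    rw [← this]
    exact pow_le_pow_left₀ (by positivity) h 2
  have hyK : ‖y‖ ^ 2 ≤ K ^ 2 := pow_le_pow_left₀ (norm_nonneg y) hy 2
  have : 0 < c * y.re := by nlinarith
  exact pos_of_mul_pos_right this hc0

namespace Matrix

variable {n : Type*} [Fintype n]

theorem linfty_opNorm_map_eq {m α β : Type*} [Fintype m] [SeminormedAddCommGroup α]
    [SeminormedAddCommGroup β] (A : Matrix m n α) (f : α → β)
    (hf : ∀ a, ‖f a‖₊ = ‖a‖₊) :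
    ‖A.map f‖ = ‖A‖ := by
  simp only [← coe_nnnorm, linfty_opNNNorm_def, map_apply, hf]

theorem mulVec_mono_of_nonneg {A : Matrix n n ℝ} (hA : ∀ i j, 0 ≤ A i j) {x y : n → ℝ}
    (hxy : x ≤ y) : A *ᵥ x ≤ A *ᵥ y :=
  fun i => dotProduct_le_dotProduct_of_nonneg_left hxy (hA i)

theorem norm_smul_norm_le_mulVec_norm {X : Matrix n n ℝ} (hX : ∀ i j, 0 ≤ X i j) {μ : ℂ}
    {u : n → ℂ} (hu : X.map Complex.ofReal *ᵥ u = μ • u) :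
    ‖μ‖ • (fun i => ‖u i‖) ≤ X *ᵥ fun i => ‖u i‖ := by
  intro i
  calc ‖μ‖ * ‖u i‖ = ‖∑ j, (X i j : ℂ) * u j‖ := by
        rw [← norm_mul, ← smul_eq_mul, ← Pi.smul_apply μ u i, ← hu]; rfl
    _ ≤ ∑ j, ‖(X i j : ℂ) * u j‖ := norm_sum_le _ _
    _ = (X *ᵥ fun i => ‖u i‖) i := by
        simp only [norm_mul, Complex.norm_real, Real.norm_of_nonneg (hX _ _)]; rfl

variable [DecidableEq n]

theorem exists_mulVec_eq_smul_of_mem_spectrum {K : Type*} [Field K] {A : Matrix n n K}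
    {μ : K} (h : μ ∈ spectrum K A) : ∃ u ≠ 0, A *ᵥ u = μ • u := by
  rw [← spectrum_toLin', ← Module.End.hasEigenvalue_iff_mem_spectrum] at h
  obtain ⟨u, hu⟩ := h.exists_hasEigenvector
  exact ⟨u, hu.2, by simpa using hu.apply_eq_smul⟩

theorem exists_mem_spectrum_le_norm_of_smul_le_mulVec {A : Matrix n n ℝ}
    (hA : ∀ i j, 0 ≤ A i j) {v : n → ℝ} (hv : 0 ≤ v) (hv0 : v ≠ 0) {θ : ℝ} (hθ : 0 ≤ θ)
    (h : θ • v ≤ A *ᵥ v) : ∃ μ ∈ spectrum ℂ (A.map Complex.ofReal), θ ≤ ‖μ‖ := by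
  obtain ⟨i₀, hi₀⟩ := Function.ne_iff.mp hv0
  have : Nonempty n := ⟨i₀⟩
  have hpow : ∀ k : ℕ, θ ^ k • v ≤ (A ^ k) *ᵥ v := by
    intro k
    induction k with
    | zero => simp
    | succ k ih =>
      calc θ ^ (k + 1) • v = θ ^ k • θ • v := by rw [pow_succ, mul_smul]
        _ ≤ θ ^ k • (A *ᵥ v) := smul_le_smul_of_nonneg_left h (by positivity)
        _ = A *ᵥ (θ ^ k • v) := (mulVec_smul A _ v).symm
        _ ≤ A *ᵥ ((A ^ k) *ᵥ v) := mulVec_mono_of_nonneg hA ih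
        _ = (A ^ (k + 1)) *ᵥ v := by rw [mulVec_mulVec, pow_succ']
  have hvpos : 0 < v i₀ := lt_of_le_of_ne (hv i₀) (Ne.symm hi₀)
  have hnorm : 0 < ‖v‖ := norm_pos_iff.mpr hv0
  refine spectrum.exists_le_norm_of_mul_pow_le_norm_pow _ (div_pos hvpos hnorm) hθ fun k => ?_
  have hmap : A.map Complex.ofReal ^ k = (A ^ k).map Complex.ofReal :=
    (Matrix.map_pow A Complex.ofRealHom k).symm
  rw [hmap, linfty_opNorm_map_eq _ _ (by simp)]
  calc v i₀ / ‖v‖ * θ ^ k = θ ^ k * v i₀ / ‖v‖ := by ring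
    _ ≤ ((A ^ k) *ᵥ v) i₀ / ‖v‖ := by gcongr; exact hpow k i₀
    _ ≤ ‖(A ^ k) *ᵥ v‖ / ‖v‖ := by
        gcongr
        exact (Real.le_norm_self _).trans (norm_le_pi_norm _ i₀)
    _ ≤ ‖A ^ k‖ := div_le_of_le_mul₀ hnorm.le (norm_nonneg _) (linfty_opNorm_mulVec _ _)

theorem exists_mem_spectrum_re_pos_of_smul_le_mulVec {Q : Matrix n n ℝ}
    (hQ : ∀ i j, i ≠ j → 0 ≤ Q i j) {v : n → ℝ} (hv : 0 ≤ v) (hv0 : v ≠ 0) {ε : ℝ}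
    (hε : 0 < ε) (h : ε • v ≤ Q *ᵥ v) :
    ∃ μ ∈ spectrum ℂ (Q.map Complex.ofReal), 0 < μ.re := by
  obtain ⟨i₀, -⟩ := Function.ne_iff.mp hv0
  have : Nonempty n := ⟨i₀⟩
  set K := ‖Q.map Complex.ofReal‖
  -- `c` dominates the diagonal of `-Q` and makes `2 c ε ≥ K²`
  set c := K ^ 2 / (2 * ε) + ∑ i, |Q i i|
  have hcK : K ^ 2 ≤ 2 * c * ε := by
    have : 0 ≤ ∑ i, |Q i i| := by positivity
    have : K ^ 2 = 2 * (K ^ 2 / (2 * ε)) * ε := by field_simp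
    nlinarith
  set A := Q + diagonal fun _ => c
  have hA : ∀ i j, 0 ≤ A i j := by
    intro i j
    rcases eq_or_ne i j with rfl | hij
    · have : |Q i i| ≤ ∑ j, |Q j j| :=
        Finset.single_le_sum (fun j _ => abs_nonneg (Q j j)) (Finset.mem_univ i)
      simp only [A, add_apply, diagonal_apply_eq, c]
      linarith [neg_abs_le (Q i i), div_nonneg (sq_nonneg K) (by positivity : (0 : ℝ) ≤ 2 * ε)]
    · simpa [A, hij] using hQ i j hij
  have hAv : (c + ε) • v ≤ A *ᵥ v := by
    intro i
    have hi := h i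
    simp only [A, add_mulVec, mulVec_diagonal, Pi.add_apply, Pi.smul_apply,
      smul_eq_mul] at hi ⊢
    linarith
  have hc : 0 ≤ c + ε := by positivity
  obtain ⟨ν, hν, hνc⟩ := exists_mem_spectrum_le_norm_of_smul_le_mulVec hA hv hv0 hc hAv
  have hmap : A.map Complex.ofReal = algebraMap ℂ _ (c : ℂ) + Q.map Complex.ofReal := by
    ext i j
    rcases eq_or_ne i j with rfl | hij <;> simp [A, algebraMap_eq_diagonal, *, add_comm]
  rw [hmap, ← spectrum.singleton_add_eq] at hν
  obtain ⟨_, rfl, y, hy, rfl⟩ := hν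
  exact ⟨y, hy,
    Complex.re_pos_of_add_le_norm_add hε hcK (spectrum.norm_le_norm_of_mem hy) hνc⟩

theorem exists_smul_le_sub_diagonal_mulVec {M : Matrix n n ℝ} (hM : ∀ i j, 0 ≤ M i j)
    {δ : n → ℝ} (hδ : ∀ j, 0 < δ j) {μ : ℂ}
    (hμ : μ ∈ spectrum ℂ ((M * (diagonal δ)⁻¹).map Complex.ofReal)) (h1 : 1 < ‖μ‖) :
    ∃ v, 0 ≤ v ∧ v ≠ 0 ∧ ∃ ε : ℝ, 0 < ε ∧ ε • v ≤ (M - diagonal δ) *ᵥ v := by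
  have hinv : (diagonal δ)⁻¹ = diagonal δ⁻¹ :=
    inv_eq_right_inv (by simp [diagonal_mul_diagonal, fun j => mul_inv_cancel₀ (hδ j).ne'])
  rw [hinv] at hμ
  obtain ⟨u, hu0, hu⟩ := exists_mulVec_eq_smul_of_mem_spectrum hμ
  set w : n → ℝ := fun i => ‖u i‖
  have hw := norm_smul_norm_le_mulVec_norm (fun i j => by
    simpa using mul_nonneg (hM i j) (inv_nonneg.mpr (hδ j).le)) hu
  obtain ⟨i₀, hi₀⟩ := Function.ne_iff.mp hu0
  have : Nonempty n := ⟨i₀⟩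
  obtain ⟨j₀, hj₀⟩ := Finite.exists_min δ
  set v := δ⁻¹ * w
  have hv_eq : diagonal δ⁻¹ *ᵥ w = v := by ext i; simp [v, mulVec_diagonal]
  have hDv : diagonal δ *ᵥ v = w := by
    ext i
    simp [v, mulVec_diagonal, ← mul_assoc, mul_inv_cancel₀ (hδ i).ne']
  have hv : 0 ≤ v := fun i => mul_nonneg (inv_nonneg.mpr (hδ i).le) (norm_nonneg _)
  have hv₀ : 0 < v i₀ := mul_pos (inv_pos.mpr (hδ i₀)) (norm_pos_iff.mpr hi₀)
  refine ⟨v, hv, Function.ne_iff.mpr ⟨i₀, hv₀.ne'⟩, (‖μ‖ - 1) * δ j₀,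
    mul_pos (by linarith) (hδ j₀), fun i => ?_⟩
  have hwi := hw i
  simp only [Pi.smul_apply, smul_eq_mul] at hwi ⊢
  calc (‖μ‖ - 1) * δ j₀ * v i ≤ (‖μ‖ - 1) * (δ i * v i) := by
        rw [mul_assoc]
        exact mul_le_mul_of_nonneg_left (mul_le_mul_of_nonneg_right (hj₀ i) (hv i))
          (by linarith)
    _ = ‖μ‖ * w i - w i := by rw [← congrFun hDv i, mulVec_diagonal]; ring
    _ ≤ ((M * diagonal δ⁻¹) *ᵥ w) i - w i := by linarith
    _ = ((M - diagonal δ) *ᵥ v) i := by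
        rw [sub_mulVec, Pi.sub_apply, hDv, ← mulVec_mulVec, hv_eq]

end Matrix

theorem exists_mem_spectrum_lt_norm_of_lt_specRad {N : ℕ} {X : Matrix (Fin N) (Fin N) ℝ}
    {r : ℝ} (hr : 0 ≤ r) (h : r < specRad N X) :
    ∃ μ ∈ spectrum ℂ (X.map Complex.ofReal), r < ‖μ‖ := by
  have hne : {s : ℝ | ∃ μ ∈ spectrum ℂ (X.map Complex.ofReal), s = ‖μ‖}.Nonempty := by
    by_contra hempty
    rw [Set.not_nonempty_iff_eq_empty] at hempty
    rw [specRad, hempty, Real.sSup_empty] at h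
    linarith
  obtain ⟨_, ⟨μ, hμ, rfl⟩, hrμ⟩ := exists_lt_of_lt_csSup hne h
  exact ⟨μ, hμ, hrμ⟩

theorem re_le_specAbsc {N : ℕ} {X : Matrix (Fin N) (Fin N) ℝ} {μ : ℂ}
    (hμ : μ ∈ spectrum ℂ (X.map Complex.ofReal)) : μ.re ≤ specAbsc N X := by
  have hfin : {r : ℝ | ∃ μ ∈ spectrum ℂ (X.map Complex.ofReal), r = μ.re}.Finite :=
    ((Matrix.finite_spectrum _).image Complex.re).subset
      (by rintro _ ⟨μ, hμ, rfl⟩; exact ⟨μ, hμ, rfl⟩)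
  exact le_csSup hfin.bddAbove ⟨μ, hμ, rfl⟩

theorem Rmin_le_Rnum {N : ℕ} {B Bh D : Matrix (Fin N) (Fin N) ℝ} {p : Fin N → ℝ}
    (hp : p ∈ cube N) : Rmin N B Bh D ≤ Rnum N B Bh D p :=
  csInf_le ⟨0, by
    rintro _ ⟨q, -, rfl⟩
    exact Real.sSup_nonneg (by rintro _ ⟨μ, -, rfl⟩; positivity)⟩ ⟨p, hp, rfl⟩

theorem Bstar_apply {N : ℕ} (B Bh : Matrix (Fin N) (Fin N) ℝ) (p : Fin N → ℝ)
    (i j : Fin N) :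
    Bstar N B Bh p i j = (1 - p i) * Bh i j + p i * B i j := by
  simp [Bstar, sub_mul, Matrix.sub_apply]

theorem Bstar_nonneg {N : ℕ} {B Bh : Matrix (Fin N) (Fin N) ℝ} (hB : ∀ j k, 0 ≤ B j k)
    (hBh : ∀ j k, 0 ≤ Bh j k) {p : Fin N → ℝ} (hp : p ∈ cube N) (i j : Fin N) :
    0 ≤ Bstar N B Bh p i j := by
  rw [Bstar_apply]
  exact add_nonneg (mul_nonneg (by linarith [(hp i).2]) (hBh i j))
    (mul_nonneg (hp i).1 (hB i j))

theorem stmt8_general {N : ℕ} (B Bh : Matrix (Fin N) (Fin N) ℝ) (δ : Fin N → ℝ)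
    (hB : ∀ j k, 0 ≤ B j k)
    (hBh : ∀ j k, 0 ≤ Bh j k)
    (hδ : ∀ j, 0 < δ j)
    (hRmin : 1 < Rmin N B Bh (Matrix.diagonal δ)) :
    ∀ p ∈ cube N,
      0 < specAbsc N (Bstar N B Bh p - Matrix.diagonal δ) ∧
      ∃ μ ∈ spectrum ℂ
          ((Bstar N B Bh p - Matrix.diagonal δ).map (Complex.ofReal : ℝ → ℂ)),
        0 < μ.re := by
  intro p hp
  have hM := Bstar_nonneg hB hBh hp
  obtain ⟨μ₀, hμ₀, hμ₀_gt⟩ :=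
    exists_mem_spectrum_lt_norm_of_lt_specRad zero_le_one (hRmin.trans_le (Rmin_le_Rnum hp))
  obtain ⟨v, hv, hv0, ε, hε, hεv⟩ :=
    Matrix.exists_smul_le_sub_diagonal_mulVec hM hδ hμ₀ hμ₀_gt
  have hQ : ∀ i j, i ≠ j → 0 ≤ (Bstar N B Bh p - Matrix.diagonal δ) i j :=
    fun i j hij => by simpa [Matrix.diagonal_apply_ne _ hij] using hM i j
  obtain ⟨μ, hμ, hμ_re⟩ :=
    Matrix.exists_mem_spectrum_re_pos_of_smul_le_mulVec hQ hv hv0 hε hεv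
  exact ⟨hμ_re.trans_le (re_le_specAbsc hμ), μ, hμ, hμ_re⟩

/-- if R_min > 1 then Λ(p) > 0 on the cube; i.e. B*(p) − D has an
eigenvalue with positive real part for every p in the cube. -/
theorem stmt8 {N : ℕ} (hN : 2 ≤ N) (B Bh : Matrix (Fin N) (Fin N) ℝ) (δ : Fin N → ℝ)
    (hB : ∀ j k, 0 ≤ B j k) (hBirr : MatIrreducible N B)
    (hBh : ∀ j k, 0 ≤ Bh j k) (hz : ∀ j k, B j k = 0 → Bh j k = 0)
    (hδ : ∀ j, 0 < δ j)
    (hRmin : 1 < Rmin N B Bh (Matrix.diagonal δ)) :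
    ∀ p ∈ cube N,
      0 < specAbsc N (Bstar N B Bh p - Matrix.diagonal δ) ∧
      ∃ μ ∈ spectrum ℂ
          ((Bstar N B Bh p - Matrix.diagonal δ).map (Complex.ofReal : ℝ → ℂ)),
        0 < μ.re :=
  stmt8_general B Bh δ hB hBh hδ hRmin
end

section
/- The state space Δ_N is positively invariant under the network SIRI dynamics: for every initial condition (p^S(0), p^I(0)) ∈ Δ_N, the corresponding solution exists for all t ≥ 0 and satisfies (p^S(t), p^I(t)) ∈ Δ_N for all t ≥ 0. -/
open Matrix Filter Topology

/-!
On each face of `Δ_N` the SIRI field points inward: on `{S_j = 0}` the `S_j`-component vanishes,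
on `{I_j = 0}` the `I_j`-component is a combination of the `I_k` with the nonnegative coefficients
`B*(S)_{jk}`, and on `{S_j + I_j = 1}` the sum of the two components is `-δ_j I_j ≤ 0`.
Composing the field with a Lipschitz retraction of `ℝ^N × ℝ^N` onto `Δ_N` that sends every point
violating a constraint onto the corresponding face gives a bounded, globally Lipschitz field along
which no constraint can become violated. Its global solution therefore stays in `Δ_N`, where it
solves the SIRI system, and any other solution starting in `Δ_N` coincides with it because the
polynomial SIRI field is Lipschitz on bounded sets.
-/

open Set Metric
open scoped NNReal

theorem image_nonpos_of_deriv_right_nonpos_of_pos {f f' : ℝ → ℝ} {a b : ℝ}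
    (hf : ContinuousOn f (Icc a b)) (hf' : ∀ x ∈ Ico a b, HasDerivWithinAt f (f' x) (Ici x) x)
    (ha : f a ≤ 0) (bound : ∀ x ∈ Ico a b, 0 < f x → f' x ≤ 0) :
    ∀ ⦃x⦄, x ∈ Icc a b → f x ≤ 0 := by
  intro x hx
  refine le_of_forall_pos_le_add fun ε hε => ?_
  have hc : 0 < 1 + (x - a) := by linarith [hx.1]
  set η := ε / (1 + (x - a))
  have hη : 0 < η := div_pos hε hc
  -- the barrier `η (1 + (y - a))` is positive and grows at rate `η`, faster than `f` where `f > 0`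
  have hfence := image_le_of_deriv_right_lt_deriv_boundary hf hf'
    (B := fun y => η * (1 + (y - a))) (B' := fun _ => η) (by simpa using ha.trans hη.le)
    (fun y => by simpa using (((hasDerivAt_id y).sub_const a).const_add 1).const_mul η)
    (fun y hy hfy => (bound y hy (hfy ▸ mul_pos hη (by linarith [hy.1]))).trans_lt hη) hx
  calc f x ≤ η * (1 + (x - a)) := hfence
    _ = 0 + ε := by rw [zero_add, div_mul_cancel₀ _ hc.ne']

theorem apply_le_of_hasDerivAt_of_apply_nonpos {E : Type*} [NormedAddCommGroup E]
    [NormedSpace ℝ E] {γ : ℝ → E} {v : E → E} {a c : ℝ} (ℓ : E →L[ℝ] ℝ)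
    (hγ : ∀ t, a ≤ t → HasDerivAt γ (v (γ t)) t) (hv : ∀ x, c < ℓ x → ℓ (v x) ≤ 0)
    (ha : ℓ (γ a) ≤ c) {t : ℝ} (ht : a ≤ t) : ℓ (γ t) ≤ c := by
  have hderiv : ∀ s, a ≤ s → HasDerivAt (fun s => ℓ (γ s) - c) (ℓ (v (γ s))) s := fun s hs =>
    (ℓ.hasFDerivAt.comp_hasDerivAt s (hγ s hs)).sub_const c
  have hnonpos := image_nonpos_of_deriv_right_nonpos_of_pos (a := a) (b := t)
    (fun s hs => (hderiv s hs.1).continuousAt.continuousWithinAt)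
    (fun s hs => (hderiv s hs.1).hasDerivWithinAt) (sub_nonpos.2 ha)
    (fun s _ hs => hv _ (sub_pos.1 hs)) ⟨ht, le_rfl⟩
  exact sub_nonpos.1 hnonpos

theorem exists_forall_hasDerivAt_of_lipschitzWith {E : Type*} [NormedAddCommGroup E]
    [NormedSpace ℝ E] [CompleteSpace E] {v : E → E} {K L : ℝ≥0} (hv : LipschitzWith K v)
    (hL : ∀ x, ‖v x‖ ≤ L) (x₀ : E) :
    ∃ γ : ℝ → E, γ 0 = x₀ ∧ ∀ t, HasDerivAt γ (v (γ t)) t := by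
  have hloc : ∀ n : ℕ, ∃ α : ℝ → E, α 0 = x₀ ∧
      ∀ t : ℝ, |t| < n + 1 → HasDerivAt α (v (α t)) t := by
    intro n
    have hn : (0 : ℝ) ≤ n := n.cast_nonneg
    have hPL : IsPicardLindelof (fun _ => v) (tmin := -((n : ℝ) + 1)) (tmax := n + 1)
        ⟨0, by constructor <;> linarith⟩ x₀ (L * (n + 1)) 0 L K :=
      .of_time_independent (fun x _ => hL x) hv.lipschitzOnWith (by
        rw [max_eq_left (by linarith)]; push_cast; rw [sub_zero, sub_zero])
    obtain ⟨α, hα0, hα⟩ := hPL.exists_eq_forall_mem_Icc_hasDerivWithinAt₀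
    refine ⟨α, hα0, fun t ht => ?_⟩
    obtain ⟨h1, h2⟩ := abs_lt.1 ht
    exact (hα t ⟨h1.le, h2.le⟩).hasDerivAt (Icc_mem_nhds h1 h2)
  choose α hα0 hα using hloc
  have agree : ∀ (n m : ℕ) (s : ℝ), |s| < n + 1 → |s| < m + 1 → α n s = α m s := by
    intro n m s hn hm
    set r : ℝ := min (n + 1) (m + 1)
    have hr : 0 < r := lt_min (by positivity) (by positivity)
    have hIoo : ∀ t ∈ Ioo (-r) r, |t| < n + 1 ∧ |t| < m + 1 := fun t ht =>
      lt_min_iff.1 (abs_lt.2 ht)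
    exact ODE_solution_unique_of_mem_Ioo (v := fun _ => v) (s := fun _ => univ)
      (fun _ _ => hv.lipschitzOnWith) ⟨neg_lt_zero.2 hr, hr⟩
      (fun t ht => ⟨hα n t (hIoo t ht).1, mem_univ _⟩)
      (fun t ht => ⟨hα m t (hIoo t ht).2, mem_univ _⟩) ((hα0 n).trans (hα0 m).symm)
      (abs_lt.1 (lt_min hn hm))
  refine ⟨fun t => α ⌈|t|⌉₊ t, by simpa using hα0 0, fun t => ?_⟩
  set n := ⌈|t|⌉₊
  have hnear : ∀ s : ℝ, |s| < n + 1 → α ⌈|s|⌉₊ s = α n s := fun s hs =>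
    agree _ _ s ((Nat.le_ceil _).trans_lt (lt_add_one _)) hs
  have ht : |t| < (n : ℝ) + 1 := (Nat.le_ceil _).trans_lt (lt_add_one _)
  have hev : (fun s => α ⌈|s|⌉₊ s) =ᶠ[𝓝 t] α n :=
    eventually_of_mem ((isOpen_lt continuous_abs continuous_const).mem_nhds ht) hnear
  simpa only [hnear t ht] using (hα n t ht).congr_of_eventuallyEq hev

section SiriField

variable {N : ℕ} {B Bh : Matrix (Fin N) (Fin N) ℝ} {δ : Fin N → ℝ}

theorem siriField_fst_apply (y : (Fin N → ℝ) × (Fin N → ℝ)) (j : Fin N) :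
    (siriField N B Bh (diagonal δ) y).1 j = -(y.1 j * ∑ k, B j k * y.2 k) := by
  simp [siriField, mulVec, dotProduct]

theorem siriField_snd_apply (y : (Fin N → ℝ) × (Fin N → ℝ)) (j : Fin N) :
    (siriField N B Bh (diagonal δ) y).2 j
      = ∑ k, ((1 - y.1 j) * Bh j k + y.1 j * B j k) * y.2 k - δ j * y.2 j
          - y.2 j * ∑ k, Bh j k * y.2 k := by
  simp [siriField, Bstar, mulVec, dotProduct, sub_mul, add_mul, Finset.sum_add_distrib,
    diagonal_apply, ite_mul, mul_assoc]

theorem siriField_fst_add_snd_apply (y : (Fin N → ℝ) × (Fin N → ℝ)) (j : Fin N) :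
    (siriField N B Bh (diagonal δ) y).1 j + (siriField N B Bh (diagonal δ) y).2 j
      = (1 - y.1 j - y.2 j) * ∑ k, Bh j k * y.2 k - δ j * y.2 j := by
  have hsplit : ∑ k, ((1 - y.1 j) * Bh j k + y.1 j * B j k) * y.2 k
      = (1 - y.1 j) * ∑ k, Bh j k * y.2 k + y.1 j * ∑ k, B j k * y.2 k := by
    simp only [Finset.mul_sum, ← Finset.sum_add_distrib]
    exact Finset.sum_congr rfl fun k _ => by ring
  rw [siriField_fst_apply, siriField_snd_apply, hsplit]
  ring

theorem siriField_fst_eq_zero {y : (Fin N → ℝ) × (Fin N → ℝ)} {j : Fin N} (h : y.1 j = 0) :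
    (siriField N B Bh (diagonal δ) y).1 j = 0 := by
  rw [siriField_fst_apply, h, zero_mul, neg_zero]

theorem siriField_snd_nonneg (hB : ∀ j k, 0 ≤ B j k) (hBh : ∀ j k, 0 ≤ Bh j k)
    {y : (Fin N → ℝ) × (Fin N → ℝ)} (hy : inSimplex N y) {j : Fin N} (h : y.2 j = 0) :
    0 ≤ (siriField N B Bh (diagonal δ) y).2 j := by
  obtain ⟨hS, -, hSI⟩ := hy j
  rw [siriField_snd_apply, h, zero_mul, mul_zero, sub_zero, sub_zero]
  exact Finset.sum_nonneg fun k _ => mul_nonneg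
    (add_nonneg (mul_nonneg (by linarith) (hBh j k)) (mul_nonneg hS (hB j k))) (hy k).2.1

theorem siriField_fst_add_snd_nonpos (hδ : ∀ j, 0 ≤ δ j) {y : (Fin N → ℝ) × (Fin N → ℝ)}
    (hy : inSimplex N y) {j : Fin N} (h : y.1 j + y.2 j = 1) :
    (siriField N B Bh (diagonal δ) y).1 j + (siriField N B Bh (diagonal δ) y).2 j ≤ 0 := by
  rw [siriField_fst_add_snd_apply, show 1 - y.1 j - y.2 j = 0 by linarith, zero_mul, zero_sub,
    neg_nonpos]
  exact mul_nonneg (hδ j) (hy j).2.1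

theorem contDiff_siriField : ContDiff ℝ 1 (siriField N B Bh (diagonal δ)) := by
  have hformula : siriField N B Bh (diagonal δ) = fun y =>
      (fun j => -(y.1 j * ∑ k, B j k * y.2 k),
       fun j => ∑ k, ((1 - y.1 j) * Bh j k + y.1 j * B j k) * y.2 k - δ j * y.2 j
          - y.2 j * ∑ k, Bh j k * y.2 k) := by
    ext y j
    · exact siriField_fst_apply y j
    · exact siriField_snd_apply y j
  rw [hformula]
  fun_prop

theorem exists_lipschitzOnWith_siriField (R : ℝ) :
    ∃ K, LipschitzOnWith K (siriField N B Bh (diagonal δ)) (closedBall 0 R) :=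
  contDiff_siriField.locallyLipschitz.locallyLipschitzOn.exists_lipschitzOnWith_of_compact
    (isCompact_closedBall 0 R)

end SiriField

section SimplexRetraction

variable {N : ℕ}

def simplexRetraction (y : (Fin N → ℝ) × (Fin N → ℝ)) : (Fin N → ℝ) × (Fin N → ℝ) :=
  (fun j => max 0 (min 1 (y.1 j)), fun j => max 0 (min (1 - max 0 (min 1 (y.1 j))) (y.2 j)))

theorem inSimplex_simplexRetraction (y : (Fin N → ℝ) × (Fin N → ℝ)) :
    inSimplex N (simplexRetraction y) := by
  intro j
  simp only [simplexRetraction]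
  refine ⟨le_max_left _ _, le_max_left _ _, ?_⟩
  have : max 0 (min (1 - max 0 (min 1 (y.1 j))) (y.2 j)) ≤ 1 - max 0 (min 1 (y.1 j)) :=
    max_le (sub_nonneg.2 (max_le zero_le_one (min_le_left _ _))) (min_le_left _ _)
  linarith

theorem simplexRetraction_eq_self {y : (Fin N → ℝ) × (Fin N → ℝ)} (hy : inSimplex N y) :
    simplexRetraction y = y := by
  ext j <;> obtain ⟨hS, hI, hSI⟩ := hy j <;>
  · simp only [simplexRetraction, max_def, min_def]
    split_ifs <;> linarith

theorem simplexRetraction_fst_eq_zero {y : (Fin N → ℝ) × (Fin N → ℝ)} {j : Fin N}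
    (h : y.1 j ≤ 0) : (simplexRetraction y).1 j = 0 :=
  max_eq_left (min_le_of_right_le h)

theorem simplexRetraction_snd_eq_zero {y : (Fin N → ℝ) × (Fin N → ℝ)} {j : Fin N}
    (h : y.2 j ≤ 0) : (simplexRetraction y).2 j = 0 :=
  max_eq_left (min_le_of_right_le h)

theorem simplexRetraction_fst_add_snd {y : (Fin N → ℝ) × (Fin N → ℝ)} {j : Fin N}
    (h : 1 ≤ y.1 j + y.2 j) : (simplexRetraction y).1 j + (simplexRetraction y).2 j = 1 := by
  simp only [simplexRetraction, max_def, min_def]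
  split_ifs <;> linarith

theorem lipschitzWith_simplexRetraction : LipschitzWith 1 (simplexRetraction (N := N)) := by
  refine LipschitzWith.of_dist_le_mul fun y z => ?_
  have hS : ∀ j, |max 0 (min 1 (y.1 j)) - max 0 (min 1 (z.1 j))| ≤ dist y z := fun j => by
    rw [max_comm 0, max_comm 0]
    calc _ ≤ |min 1 (y.1 j) - min 1 (z.1 j)| := abs_max_sub_max_le_abs _ _ _
      _ ≤ max |1 - 1| |y.1 j - z.1 j| := abs_min_sub_min_le_max _ _ _ _
      _ = dist (y.1 j) (z.1 j) := by
        rw [sub_self, abs_zero, max_eq_right (abs_nonneg _), Real.dist_eq]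
      _ ≤ dist y z := (dist_le_pi_dist _ _ j).trans (le_max_left _ _)
  rw [NNReal.coe_one, one_mul, Prod.dist_eq]
  refine max_le ((dist_pi_le_iff dist_nonneg).2 fun j => ?_)
    ((dist_pi_le_iff dist_nonneg).2 fun j => ?_)
  · rw [Real.dist_eq]
    exact hS j
  · rw [Real.dist_eq]
    simp only [simplexRetraction]
    rw [max_comm 0 (min _ (y.2 j)), max_comm 0 (min _ (z.2 j))]
    calc _ ≤ |min (1 - max 0 (min 1 (y.1 j))) (y.2 j)
            - min (1 - max 0 (min 1 (z.1 j))) (z.2 j)| := abs_max_sub_max_le_abs _ _ _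
      _ ≤ _ := abs_min_sub_min_le_max _ _ _ _
      _ ≤ dist y z := by
        refine max_le ?_ ?_
        · rw [sub_sub_sub_cancel_left, abs_sub_comm]
          exact hS j
        · rw [← Real.dist_eq]
          exact (dist_le_pi_dist _ _ j).trans (le_max_right _ _)

theorem norm_le_one_of_inSimplex {y : (Fin N → ℝ) × (Fin N → ℝ)} (hy : inSimplex N y) :
    ‖y‖ ≤ 1 := by
  rw [Prod.norm_def]
  refine max_le ((pi_norm_le_iff_of_nonneg zero_le_one).2 fun j => ?_)
    ((pi_norm_le_iff_of_nonneg zero_le_one).2 fun j => ?_) <;>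
  · obtain ⟨hS, hI, hSI⟩ := hy j
    rw [Real.norm_eq_abs, abs_le]
    constructor <;> linarith

end SimplexRetraction

section Invariance

variable {N : ℕ} {B Bh : Matrix (Fin N) (Fin N) ℝ} {δ : Fin N → ℝ}

theorem inSimplex_of_hasDerivAt_siriField_simplexRetraction (hB : ∀ j k, 0 ≤ B j k)
    (hBh : ∀ j k, 0 ≤ Bh j k) (hδ : ∀ j, 0 ≤ δ j) {γ : ℝ → (Fin N → ℝ) × (Fin N → ℝ)}
    (hγ : ∀ t, 0 ≤ t →
      HasDerivAt γ (siriField N B Bh (diagonal δ) (simplexRetraction (γ t))) t)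
    (h0 : inSimplex N (γ 0)) {t : ℝ} (ht : 0 ≤ t) : inSimplex N (γ t) := by
  intro j
  let S : ((Fin N → ℝ) × (Fin N → ℝ)) →L[ℝ] ℝ :=
    ContinuousLinearMap.proj j ∘L ContinuousLinearMap.fst ℝ _ _
  let I : ((Fin N → ℝ) × (Fin N → ℝ)) →L[ℝ] ℝ :=
    ContinuousLinearMap.proj j ∘L ContinuousLinearMap.snd ℝ _ _
  obtain ⟨hS0, hI0, hSI0⟩ := h0 j
  have hS := apply_le_of_hasDerivAt_of_apply_nonpos (-S) (c := 0)
    (v := fun y => siriField N B Bh (diagonal δ) (simplexRetraction y)) hγ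
    (fun y hy => neg_nonpos.2
      (siriField_fst_eq_zero (Bh := Bh) (δ := δ)
        (simplexRetraction_fst_eq_zero (neg_pos.1 hy).le)).ge)
    (neg_nonpos.2 hS0) ht
  have hI := apply_le_of_hasDerivAt_of_apply_nonpos (-I) (c := 0)
    (v := fun y => siriField N B Bh (diagonal δ) (simplexRetraction y)) hγ
    (fun y hy => neg_nonpos.2 (siriField_snd_nonneg hB hBh
      (inSimplex_simplexRetraction y) (simplexRetraction_snd_eq_zero (neg_pos.1 hy).le)))
    (neg_nonpos.2 hI0) ht
  have hSI := apply_le_of_hasDerivAt_of_apply_nonpos (S + I) (c := 1)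
    (v := fun y => siriField N B Bh (diagonal δ) (simplexRetraction y)) hγ
    (fun y hy => siriField_fst_add_snd_nonpos hδ (inSimplex_simplexRetraction y)
      (simplexRetraction_fst_add_snd hy.le))
    hSI0 ht
  exact ⟨neg_nonpos.1 hS, neg_nonpos.1 hI, hSI⟩

theorem exists_isSol_inSimplex (hB : ∀ j k, 0 ≤ B j k) (hBh : ∀ j k, 0 ≤ Bh j k)
    (hδ : ∀ j, 0 ≤ δ j) {y₀ : (Fin N → ℝ) × (Fin N → ℝ)} (hy₀ : inSimplex N y₀) :
    ∃ y : ℝ → (Fin N → ℝ) × (Fin N → ℝ), y 0 = y₀ ∧ IsSol N B Bh (diagonal δ) y ∧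
      ∀ t, 0 ≤ t → inSimplex N (y t) := by
  have hmaps : MapsTo (simplexRetraction (N := N)) univ (closedBall 0 1) := fun y _ =>
    mem_closedBall_zero_iff.2 (norm_le_one_of_inSimplex (inSimplex_simplexRetraction y))
  obtain ⟨K, hK⟩ := exists_lipschitzOnWith_siriField (B := B) (Bh := Bh) (δ := δ) 1
  have hlip : LipschitzWith (K * 1) (siriField N B Bh (diagonal δ) ∘ simplexRetraction) :=
    lipschitzOnWith_univ.1 (hK.comp lipschitzWith_simplexRetraction.lipschitzOnWith hmaps)
  obtain ⟨C, hC⟩ := (isCompact_closedBall (0 : (Fin N → ℝ) × (Fin N → ℝ)) 1)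
    |>.exists_bound_of_continuousOn contDiff_siriField.continuous.continuousOn
  obtain ⟨y, hy0, hy⟩ := exists_forall_hasDerivAt_of_lipschitzWith hlip (L := C.toNNReal)
    (fun x => (hC _ (hmaps (mem_univ x))).trans (Real.le_coe_toNNReal C)) y₀
  have hin : ∀ t, 0 ≤ t → inSimplex N (y t) := fun t ht =>
    inSimplex_of_hasDerivAt_siriField_simplexRetraction hB hBh hδ (fun s _ => hy s)
      (hy0 ▸ hy₀) ht
  refine ⟨y, hy0, fun t ht => ?_, hin⟩
  simpa only [Function.comp_apply, simplexRetraction_eq_self (hin t ht)] using hy t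

theorem inSimplex_of_isSol (hB : ∀ j k, 0 ≤ B j k) (hBh : ∀ j k, 0 ≤ Bh j k)
    (hδ : ∀ j, 0 ≤ δ j) {y : ℝ → (Fin N → ℝ) × (Fin N → ℝ)}
    (hy : IsSol N B Bh (diagonal δ) y) (hy₀ : inSimplex N (y 0)) {t : ℝ} (ht : 0 ≤ t) :
    inSimplex N (y t) := by
  obtain ⟨z, hz0, hz, hzin⟩ := exists_isSol_inSimplex hB hBh hδ hy₀
  have hycont : ContinuousOn y (Icc 0 t) := fun s hs =>
    (hy s hs.1).continuousAt.continuousWithinAt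
  obtain ⟨R, hR⟩ := isCompact_Icc.exists_bound_of_continuousOn hycont
  obtain ⟨K, hK⟩ := exists_lipschitzOnWith_siriField (B := B) (Bh := Bh) (δ := δ) (max R 1)
  have hyz := ODE_solution_unique_of_mem_Icc_right
    (v := fun _ => siriField N B Bh (diagonal δ)) (s := fun _ => closedBall 0 (max R 1))
    (fun _ _ => hK) hycont (fun s hs => (hy s hs.1).hasDerivWithinAt)
    (fun s hs => mem_closedBall_zero_iff.2
      ((hR s (Ico_subset_Icc_self hs)).trans (le_max_left _ _)))
    (fun s hs => (hz s hs.1).continuousAt.continuousWithinAt)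
    (fun s hs => (hz s hs.1).hasDerivWithinAt)
    (fun s hs => mem_closedBall_zero_iff.2
      ((norm_le_one_of_inSimplex (hzin s hs.1)).trans (le_max_right _ _)))
    hz0.symm ⟨ht, le_rfl⟩
  exact hyz ▸ hzin t ht

end Invariance

theorem stmt14_general {N : ℕ} (B Bh : Matrix (Fin N) (Fin N) ℝ) (δ : Fin N → ℝ)
    (hB : ∀ j k, 0 ≤ B j k)
    (hBh : ∀ j k, 0 ≤ Bh j k)
    (hδ : ∀ j, 0 < δ j) :
    (∀ y₀ : (Fin N → ℝ) × (Fin N → ℝ), inSimplex N y₀ →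
      ∃ y : ℝ → (Fin N → ℝ) × (Fin N → ℝ),
        y 0 = y₀ ∧ IsSol N B Bh (Matrix.diagonal δ) y ∧
        ∀ t : ℝ, 0 ≤ t → inSimplex N (y t))
    ∧ (∀ y : ℝ → (Fin N → ℝ) × (Fin N → ℝ),
        IsSol N B Bh (Matrix.diagonal δ) y → inSimplex N (y 0) →
        ∀ t : ℝ, 0 ≤ t → inSimplex N (y t)) :=
  ⟨fun _ hy₀ => exists_isSol_inSimplex hB hBh (fun j => (hδ j).le) hy₀,
    fun _ hy hy₀ _ ht => inSimplex_of_isSol hB hBh (fun j => (hδ j).le) hy hy₀ ht⟩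

/-- Δ_N is positively invariant: solutions exist for all t ≥ 0 and
stay in Δ_N, and every solution starting in Δ_N remains in Δ_N. -/
theorem stmt14 {N : ℕ} (hN : 2 ≤ N) (B Bh : Matrix (Fin N) (Fin N) ℝ) (δ : Fin N → ℝ)
    (hB : ∀ j k, 0 ≤ B j k) (hBirr : MatIrreducible N B)
    (hBh : ∀ j k, 0 ≤ Bh j k) (hz : ∀ j k, B j k = 0 → Bh j k = 0)
    (hδ : ∀ j, 0 < δ j) :
    (∀ y₀ : (Fin N → ℝ) × (Fin N → ℝ), inSimplex N y₀ →
      ∃ y : ℝ → (Fin N → ℝ) × (Fin N → ℝ),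
        y 0 = y₀ ∧ IsSol N B Bh (Matrix.diagonal δ) y ∧
        ∀ t : ℝ, 0 ≤ t → inSimplex N (y t))
    ∧ (∀ y : ℝ → (Fin N → ℝ) × (Fin N → ℝ),
        IsSol N B Bh (Matrix.diagonal δ) y → inSimplex N (y 0) →
        ∀ t : ℝ, 0 ≤ t → inSimplex N (y t)) :=
  stmt14_general B Bh δ hB hBh hδ
end
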